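/- Let A be a self-adjoint operator on a complex Hilbert space, α > 0 and Z ∈ ℝ, and let L_Z = (π/(2α))^{-1/4} exp(-α(A - Z)²) (functional calculus). Then for every unit vector ψ in H, the function Z ↦ ⟨L_Z ψ, L_Z ψ⟩ is a probability density on ℝ, i.e. it is nonnegative and its integral over Z ∈ ℝ equals 1. -/

import Mathlib

open MeasureTheory Real
open scoped InnerProductSpace

/-! Since `t ↦ exp (-α (t - Z)²)` is real, `‖L_Z ψ‖² = c² ⟪ψ, exp (-2α (A - Z)²) ψ⟫` with
`c = (π / (2α)) ^ (-1/4)`. On the compact spectrum of `A` these Gaussians are dominated by a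
single integrable Gaussian in `Z`, so the functional calculus commutes with `∫ dZ`; as
`∫ exp (-2α (t - Z)²) dZ = √(π / (2α))` for every `t`, the integral becomes
`c² √(π / (2α)) ‖ψ‖² = 1`. -/

lemma exp_neg_mul_sub_sq_le {b : ℝ} (hb : 0 ≤ b) (t Z : ℝ) :
    exp (-b * (t - Z) ^ 2) ≤ exp (b * t ^ 2) * exp (-(b / 2) * Z ^ 2) := by
  rw [← exp_add, exp_le_exp]
  nlinarith [mul_nonneg hb (sq_nonneg (Z - 2 * t))]

lemma Bornology.IsBounded.exists_integrable_gaussian_bound {s : Set ℝ} (hs : IsBounded s)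
    {b : ℝ} (hb : 0 < b) :
    ∃ bound : ℝ → ℝ, Integrable bound ∧ ∀ Z, ∀ t ∈ s, ‖exp (-b * (t - Z) ^ 2)‖ ≤ bound Z := by
  obtain ⟨R, hR⟩ := hs.exists_norm_le
  refine ⟨fun Z => exp (b * R ^ 2) * exp (-(b / 2) * Z ^ 2),
    (integrable_exp_neg_mul_sq (half_pos hb)).const_mul _, fun Z t ht => ?_⟩
  rw [norm_of_nonneg (exp_pos _).le]
  refine (exp_neg_mul_sub_sq_le hb.le t Z).trans ?_
  dsimp only
  gcongr exp (b * ?_) * _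
  simpa [sq_abs] using sq_le_sq' (abs_le.1 (hR t ht)).1 (abs_le.1 (hR t ht)).2

section Gaussian

variable {A : Type*} {p : A → Prop} [NormedRing A] [StarRing A] [NormedAlgebra ℝ A]
  [CompleteSpace A] [ContinuousFunctionalCalculus ℝ A p] {b : ℝ}

lemma integrable_cfc_gaussian (hb : 0 < b) (a : A) (ha : p a := by cfc_tac) :
    Integrable (fun Z : ℝ => cfc (fun t : ℝ => exp (-b * (t - Z) ^ 2)) a) := by
  obtain ⟨bound, hint, hbound⟩ :=
    (spectrum.isCompact (𝕜 := ℝ) a).isBounded.exists_integrable_gaussian_bound hb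
  exact integrable_cfc _ bound a (by fun_prop) (.of_forall hbound) hint.2

lemma integral_cfc_gaussian (hb : 0 < b) (a : A) (ha : p a := by cfc_tac) :
    ∫ Z : ℝ, cfc (fun t : ℝ => exp (-b * (t - Z) ^ 2)) a = algebraMap ℝ A √(π / b) := by
  obtain ⟨bound, hint, hbound⟩ :=
    (spectrum.isCompact (𝕜 := ℝ) a).isBounded.exists_integrable_gaussian_bound hb
  rw [← cfc_integral _ bound a (by fun_prop) (.of_forall hbound) hint.2, ← cfc_const _ a]
  congr! 2 with t
  rw [integral_sub_left_eq_self (fun x => exp (-b * x ^ 2)) volume t, integral_gaussian]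

end Gaussian

section Hilbert

variable {H : Type*} [NormedAddCommGroup H] [InnerProductSpace ℂ H]

lemma re_inner_algebraMap_apply_self (r : ℝ) (x : H) :
    (⟪x, algebraMap ℝ (H →L[ℂ] H) r x⟫_ℂ).re = r * ‖x‖ ^ 2 := by
  rw [Algebra.algebraMap_eq_smul_one, smul_apply, one_apply_eq_self,
    RCLike.real_smul_eq_coe_smul (K := ℂ), inner_smul_real_right, Complex.real_smul,
    Complex.re_ofReal_mul, ← inner_self_eq_norm_sq (𝕜 := ℂ)]
  rfl

lemma integral_re_inner_apply [CompleteSpace H] {X : Type*} [MeasurableSpace X] {μ : Measure X}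
    {T : X → H →L[ℂ] H} (hT : Integrable T μ) (x : H) :
    ∫ z, (⟪x, T z x⟫_ℂ).re ∂μ = (⟪x, (∫ z, T z ∂μ) x⟫_ℂ).re := by
  rw [ContinuousLinearMap.integral_apply hT, ← integral_inner (hT.apply_continuousLinearMap x)]
  exact Complex.reCLM.integral_comp_comm ((hT.apply_continuousLinearMap x).const_inner x)

lemma norm_cfc_apply_sq [CompleteSpace H] {A : H →L[ℂ] H} (f : ℝ → ℝ) (x : H)
    (hf : ContinuousOn f (spectrum ℝ A) := by cfc_cont_tac) (hA : IsSelfAdjoint A := by cfc_tac) :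
    ‖cfc f A x‖ ^ 2 = (⟪x, cfc (fun t => f t ^ 2) A x⟫_ℂ).re := by
  rw [ContinuousLinearMap.apply_norm_sq_eq_inner_adjoint_right, cfc_pow f 2 A,
    (cfc_predicate f A).adjoint_eq, pow_two]
  rfl

end Hilbert

lemma rpow_neg_one_div_four_sq_mul_sqrt {x : ℝ} (hx : 0 < x) :
    (x ^ (-(1 : ℝ) / 4)) ^ 2 * √x = 1 := by
  rw [sqrt_eq_rpow, ← rpow_natCast, ← rpow_mul hx.le, ← rpow_add hx]
  norm_num

theorem collapse_probability_density {H : Type*} [NormedAddCommGroup H]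
    [InnerProductSpace ℂ H] [CompleteSpace H]
    (A : H →L[ℂ] H) (hA : IsSelfAdjoint A) (α : ℝ) (hα : 0 < α)
    (ψ : H) (hψ : ‖ψ‖ = 1) :
    (∀ Z : ℝ, 0 ≤
      ‖((Real.pi / (2 * α)) ^ (-(1 : ℝ) / 4) •
          cfc (fun t : ℝ => Real.exp (-α * (t - Z) ^ 2)) A) ψ‖ ^ 2) ∧
    (∫ Z : ℝ,
      ‖((Real.pi / (2 * α)) ^ (-(1 : ℝ) / 4) •
          cfc (fun t : ℝ => Real.exp (-α * (t - Z) ^ 2)) A) ψ‖ ^ 2) = 1 := by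
  refine ⟨fun Z => by positivity, ?_⟩
  have h2α : 0 < 2 * α := by positivity
  set c := (π / (2 * α)) ^ (-(1 : ℝ) / 4)
  have hsq (Z : ℝ) : ‖(c • cfc (fun t : ℝ => exp (-α * (t - Z) ^ 2)) A) ψ‖ ^ 2 =
      c ^ 2 * (⟪ψ, cfc (fun t : ℝ => exp (-(2 * α) * (t - Z) ^ 2)) A ψ⟫_ℂ).re := by
    rw [smul_apply, norm_smul, mul_pow, norm_cfc_apply_sq _ ψ,
      norm_of_nonneg (by positivity)]
    congr 5 with t
    rw [← exp_nat_mul]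
    congr 1
    push_cast
    ring
  simp_rw [hsq]
  rw [integral_const_mul, integral_re_inner_apply (integrable_cfc_gaussian h2α A),
    integral_cfc_gaussian h2α A, re_inner_algebraMap_apply_self, hψ, one_pow, mul_one]
  exact rpow_neg_one_div_four_sq_mul_sqrt (by positivity)
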